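/- Let (b_n) be a D-sequence with b_{n+1}/b_n → ∞ and let x ∈ (−1/2, 1/2] with expansion x = ∑_{n≥1} d_n/b_n, |d_n| ≤ b_n/(2b_{n−1}). If the character χ : ℤ → ℝ/ℤ, k ↦ kx + ℤ, is continuous for the topology τ_b (equivalently, there exists m with χ(V_{b,m}) ⊆ 𝕋₊), then d_n = 0 for all but finitely many n; consequently x is of the form a/b_N for some integers a, N, and χ belongs to the subgroup generated by the characters ξ_n : k ↦ k/b_n + ℤ. -/

import Mathlib

def IsDSeq (b : ℕ → ℕ) : Prop :=
  b 0 = 1 ∧ (∀ n, b n ∣ b (n + 1)) ∧ ∀ n, b n ≠ b (n + 1)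

/-!
Write `b n * x = z n + r n` with `z n ∈ ℤ`, where `r n = b n * (x - ∑_{j ≤ n} d j / b j)` is the
scaled remainder of the expansion. Once `b (l + 1) ≥ 8 m b l` for all `l ≥ n`, every `c * b n` with
`|c| ≤ K n := ⌊b (n + 1) / (8 m b n)⌋` lies in `V_{b,m}`, so every `c * r n` is within `1/4` of an
integer; since the tail of the expansion gives `|r n| < 3/4`, the multiples `c * r n` cannot jump
over `(1/4, 3/4)` and hence `K n * |r n| ≤ 1/4`. If moreover `d (n + 1) ≠ 0`, then
`r n ≈ d (n + 1) * b n / b (n + 1)` forces `K n * |r n| > 1/(32 m)`.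

With infinitely many nonzero digits pick `8 m` such scales. Integer combinations of the `b n` over
distinct scales with coefficients bounded by `K n` still lie in `V_{b,m}`, because the scales
grow geometrically; choosing the coefficients greedily, with the signs of the `r n`, gives
`k ∈ V_{b,m}` with `k x` congruent mod `ℤ` to a number in `(1/4, 1/2]`, a contradiction. With
finitely many digits, `x` is a partial sum, i.e. `a / b N`.
-/

open Finset Filter

namespace IsDSeq

variable {b : ℕ → ℕ}

theorem pos (hb : IsDSeq b) (n : ℕ) : 0 < b n := by
  refine Nat.pos_of_ne_zero fun h => hb.2.2 n ?_
  rw [h, eq_comm, ← zero_dvd_iff, ← h]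
  exact hb.2.1 n

theorem dvd_of_le (hb : IsDSeq b) {i j : ℕ} (h : i ≤ j) : b i ∣ b j :=
  Nat.rel_of_forall_rel_succ_of_le (· ∣ ·) hb.2.1 h

theorem two_mul_le (hb : IsDSeq b) (n : ℕ) : 2 * b n ≤ b (n + 1) := by
  obtain ⟨c, hc⟩ := hb.2.1 n
  have hc1 : c ≠ 1 := by rintro rfl; exact hb.2.2 n (by rw [hc, mul_one])
  have hc0 : c ≠ 0 := by rintro rfl; exact (hb.pos (n + 1)).ne' (by rw [hc, mul_zero])
  rw [hc, mul_comm]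
  exact Nat.mul_le_mul_left _ (by omega)

theorem sum_range_le_two_mul (hb : IsDSeq b) (j : ℕ) : ∑ n ∈ range j, b (n + 1) ≤ 2 * b j := by
  induction j with
  | zero => simp
  | succ j ih =>
    rw [sum_range_succ]
    linarith [hb.two_mul_le j]

end IsDSeq

def NearInt (ε t : ℝ) : Prop := ∃ z : ℤ, |t - z| ≤ ε

theorem NearInt.of_intCast_add {ε t : ℝ} {w : ℤ} (h : NearInt ε (w + t)) : NearInt ε t := by
  obtain ⟨z, hz⟩ := h
  exact ⟨z - w, by push_cast; rwa [sub_sub_eq_add_sub, add_comm t]⟩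

theorem NearInt.abs_le {t : ℝ} (h : NearInt (1 / 4) t) (ht : |t| < 3 / 4) : |t| ≤ 1 / 4 := by
  obtain ⟨z, hz⟩ := h
  have hz0 : z = 0 := by
    have : |(z : ℝ)| < 1 := by
      calc |(z : ℝ)| = |t - (t - z)| := by ring_nf
        _ ≤ |t| + |t - z| := abs_sub _ _
        _ < 1 := by linarith
    exact Int.abs_lt_one_iff.mp (by exact_mod_cast this)
  simpa [hz0] using hz

/-- Once `|t| ≤ 1/4` (the case `c = 1`), the multiples `c * t` move in steps of at most `1/4`
and so cannot cross the gap `(1/4, 3/4)`. -/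
theorem natCast_mul_abs_le_of_nearInt {t : ℝ} {K : ℕ} (ht : |t| < 3 / 4)
    (h : ∀ c : ℕ, c ≤ K → NearInt (1 / 4) (c * t)) : K * |t| ≤ 1 / 4 := by
  rcases Nat.eq_zero_or_pos K with rfl | hK
  · simp
  have h1 : |t| ≤ 1 / 4 := (by simpa using h 1 hK : NearInt (1 / 4) t).abs_le ht
  suffices ∀ c ≤ K, c * |t| ≤ 1 / 4 from this K le_rfl
  intro c
  induction c with
  | zero => simp
  | succ c ih =>
    intro hc
    have hnn : (0 : ℝ) ≤ (c + 1 : ℕ) := Nat.cast_nonneg _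
    rw [← abs_of_nonneg hnn, ← abs_mul]
    refine (h (c + 1) hc).abs_le ?_
    rw [abs_mul, abs_of_nonneg hnn]
    push_cast
    linarith [ih (by omega)]

theorem exists_natCast_mul_mem_Ioc {s a v β : ℝ} {K : ℕ} (hsa : s ≤ a) (haK : a < s + K * v)
    (hv : 0 ≤ v) (hvβ : v ≤ β) : ∃ c ≤ K, a < s + c * v ∧ s + c * v ≤ a + β := by
  have hv0 : 0 < v := by
    rcases hv.lt_or_eq with h | h
    · exact h
    · subst h; simp at haK; linarith
  have hq : 0 ≤ (a - s) / v := div_nonneg (by linarith) hv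
  refine ⟨⌊(a - s) / v⌋₊ + 1, ?_, ?_, ?_⟩
  · refine Nat.succ_le_of_lt ((Nat.floor_lt hq).mpr ?_)
    rw [div_lt_iff₀ hv0]; linarith
  · have := Nat.lt_floor_add_one ((a - s) / v)
    rw [div_lt_iff₀ hv0] at this
    push_cast; linarith
  · have := Nat.floor_le hq
    rw [le_div_iff₀ hv0] at this
    push_cast; linarith

theorem exists_le_sum_natCast_mul_le {ι : Type*} [DecidableEq ι] (s : Finset ι) {v : ι → ℝ}
    {K : ι → ℕ} {a β : ℝ} (ha : 0 ≤ a) (hv : ∀ i ∈ s, 0 ≤ v i ∧ v i ≤ β)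
    (h : a < ∑ i ∈ s, K i * v i) :
    ∃ e : ι → ℕ, (∀ i, e i ≤ K i) ∧ a < ∑ i ∈ s, e i * v i ∧ ∑ i ∈ s, e i * v i ≤ a + β := by
  induction s using Finset.induction_on with
  | empty => simp at h; linarith
  | insert i s hi ih =>
    rw [sum_insert hi] at h
    have hv' : ∀ j ∈ s, 0 ≤ v j ∧ v j ≤ β := fun j hj => hv j (mem_insert_of_mem hj)
    have hsum {e : ι → ℕ} (c : ℕ) :
        ∑ j ∈ insert i s, (Function.update e i c j : ℝ) * v j = c * v i + ∑ j ∈ s, e j * v j := by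
      rw [sum_insert hi, Function.update_self]
      congr 1
      exact sum_congr rfl fun j hj => by rw [Function.update_of_ne (ne_of_mem_of_not_mem hj hi)]
    by_cases hs : a < ∑ j ∈ s, K j * v j
    · obtain ⟨e, heK, he⟩ := ih hv' hs
      refine ⟨Function.update e i 0, fun j => ?_, ?_⟩
      · rcases eq_or_ne j i with rfl | hj <;> simp [*]
      · simpa [hsum] using he
    · obtain ⟨c, hcK, hc⟩ := exists_natCast_mul_mem_Ioc (not_lt.mp hs) (by linarith)
        (hv i (mem_insert_self i s)).1 (hv i (mem_insert_self i s)).2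
      refine ⟨Function.update K i c, fun j => ?_, ?_⟩
      · rcases eq_or_ne j i with rfl | hj <;> simp [*]
      · rw [hsum]; constructor <;> linarith [hc.1, hc.2]

namespace DExpansion

variable (b : ℕ → ℕ) (d : ℕ → ℤ) (x : ℝ)

noncomputable def partialSum (n : ℕ) : ℝ := ∑ j ∈ range n, (d (j + 1) : ℝ) / b (j + 1)

noncomputable def remainder (n : ℕ) : ℝ := b n * (x - partialSum b d n)

def zeroNhd (m : ℕ) : Set ℤ := {k | ∀ n, NearInt (1 / (4 * m)) (k / b n)}

/-- Multipliers `c` with `|c| ≤ scaleBound b m n` keep `c * b n` inside `V_{b,m}`. -/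
noncomputable def scaleBound (m n : ℕ) : ℕ := ⌊(b (n + 1) : ℝ) / (8 * m * b n)⌋₊

variable {b d x}

theorem exists_intCast_eq_mul_partialSum (hb : IsDSeq b) (n : ℕ) :
    ∃ z : ℤ, (b n : ℝ) * partialSum b d n = z := by
  induction n with
  | zero => exact ⟨0, by simp [partialSum]⟩
  | succ n ih =>
    obtain ⟨z, hz⟩ := ih
    obtain ⟨q, hq⟩ := hb.2.1 n
    refine ⟨q * z + d (n + 1), ?_⟩
    have h0 : (b (n + 1) : ℝ) ≠ 0 := by exact_mod_cast (hb.pos (n + 1)).ne'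
    rw [partialSum, sum_range_succ, ← partialSum, mul_add, mul_div_cancel₀ _ h0, hq,
      Nat.cast_mul, mul_comm (b n : ℝ), mul_assoc, hz]
    push_cast
    ring

theorem exists_mul_eq_intCast_add_remainder (hb : IsDSeq b) (n : ℕ) :
    ∃ z : ℤ, (b n : ℝ) * x = z + remainder b d x n := by
  obtain ⟨z, hz⟩ := exists_intCast_eq_mul_partialSum (d := d) hb n
  exact ⟨z, by rw [remainder, ← hz]; ring⟩

theorem remainder_eq_mul_add_remainder_succ {n : ℕ} (hb : b (n + 1) ≠ 0) :
    remainder b d x n = b n / b (n + 1) * (d (n + 1) + remainder b d x (n + 1)) := by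
  simp only [remainder, partialSum, sum_range_succ]
  field_simp
  ring

theorem div_two_mul_le_abs_remainder {n : ℕ} (hb : 0 < b (n + 1)) (hdn : d (n + 1) ≠ 0)
    (hr : |remainder b d x (n + 1)| ≤ 1 / 2) : b n / (2 * b (n + 1)) ≤ |remainder b d x n| := by
  have hd1 : (1 : ℝ) ≤ |(d (n + 1) : ℝ)| := by exact_mod_cast Int.one_le_abs hdn
  have : 1 / 2 ≤ |(d (n + 1) : ℝ) + remainder b d x (n + 1)| := by
    linarith [abs_sub_abs_le_abs_add (d (n + 1) : ℝ) (remainder b d x (n + 1))]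
  rw [remainder_eq_mul_add_remainder_succ hb.ne', abs_mul, abs_of_nonneg (by positivity),
    div_mul_eq_div_div_swap, div_eq_mul_one_div _ (2 : ℝ)]
  exact mul_le_mul_of_nonneg_left this (by positivity)

theorem abs_remainder_le (hb : IsDSeq b)
    (hd : ∀ n : ℕ, 1 ≤ n → |(d n : ℝ)| ≤ (b n : ℝ) / (2 * b (n - 1)))
    (hsum : HasSum (fun n : ℕ => (d (n + 1) : ℝ) / b (n + 1)) x) {R : ℝ} (hR : 1 < R) {n : ℕ}
    (hgrowth : ∀ l ≥ n, R * b l ≤ b (l + 1)) :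
    |remainder b d x n| ≤ (2 * (1 - R⁻¹))⁻¹ := by
  have hbpos (k : ℕ) : (0 : ℝ) < b k := by exact_mod_cast hb.pos k
  have hgeom (j : ℕ) : (b n : ℝ) * R ^ j ≤ b (n + j) := by
    induction j with
    | zero => simp
    | succ j ih =>
      calc (b n : ℝ) * R ^ (j + 1) = R * (b n * R ^ j) := by ring
        _ ≤ R * b (n + j) := by gcongr
        _ ≤ b (n + j + 1) := hgrowth _ (by omega)
  have hterm (j : ℕ) : ‖(d (j + n + 1) : ℝ) / b (j + n + 1)‖ ≤ (2 * (b n : ℝ))⁻¹ * R⁻¹ ^ j := by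
    have h := hd (j + n + 1) (by omega)
    rw [show j + n + 1 - 1 = n + j by omega] at h
    calc ‖(d (j + n + 1) : ℝ) / b (j + n + 1)‖
        ≤ (b (j + n + 1) : ℝ) / (2 * b (n + j)) / b (j + n + 1) := by
          rw [Real.norm_eq_abs, abs_div, abs_of_pos (hbpos _)]
          gcongr
      _ = (2 * (b (n + j) : ℝ))⁻¹ := by field_simp [(hbpos (j + n + 1)).ne']
      _ ≤ (2 * ((b n : ℝ) * R ^ j))⁻¹ := by have := hbpos n; gcongr; exact hgeom j
      _ = (2 * (b n : ℝ))⁻¹ * R⁻¹ ^ j := by rw [inv_pow, ← mul_inv, mul_assoc]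
  have htail : HasSum (fun j => (d (j + n + 1) : ℝ) / b (j + n + 1)) (x - partialSum b d n) :=
    (hasSum_nat_add_iff' n).mpr hsum
  have hgeom_sum : HasSum (fun j : ℕ => (2 * (b n : ℝ))⁻¹ * R⁻¹ ^ j)
      ((2 * (b n : ℝ))⁻¹ * (1 - R⁻¹)⁻¹) :=
    (hasSum_geometric_of_lt_one (by positivity) (inv_lt_one_of_one_lt₀ hR)).mul_left _
  have hle := htail.norm_le_of_bounded hgeom_sum hterm
  rw [Real.norm_eq_abs] at hle
  rw [remainder, abs_mul, abs_of_pos (hbpos n)]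
  calc (b n : ℝ) * |x - partialSum b d n| ≤ b n * ((2 * (b n : ℝ))⁻¹ * (1 - R⁻¹)⁻¹) := by gcongr
    _ = (2 * (1 - R⁻¹))⁻¹ := by field_simp [(hbpos n).ne']

theorem sum_mul_mem_zeroNhd (hb : IsDSeq b) {m : ℕ} (hm : 0 < m) (F : Finset ℕ) {c : ℕ → ℤ}
    (hc : ∀ n ∈ F, |(c n : ℝ)| * (8 * m * b n) ≤ b (n + 1)) :
    ∑ n ∈ F, c n * b n ∈ zeroNhd b m := by
  intro j
  have hbpos (k : ℕ) : (0 : ℝ) < b k := by exact_mod_cast hb.pos k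
  have hm' : (0 : ℝ) < m := by exact_mod_cast hm
  refine ⟨∑ n ∈ F.filter (j ≤ ·), c n * (b n / b j : ℕ), ?_⟩
  have hsplit : ((∑ n ∈ F, c n * b n : ℤ) : ℝ) / b j - ((∑ n ∈ F.filter (j ≤ ·),
      c n * (b n / b j : ℕ) : ℤ) : ℝ) = ∑ n ∈ F.filter (¬ j ≤ ·), (c n * b n : ℝ) / b j := by
    have hint : ((∑ n ∈ F.filter (j ≤ ·), c n * (b n / b j : ℕ) : ℤ) : ℝ) =
        ∑ n ∈ F.filter (j ≤ ·), (c n * b n : ℝ) / b j := by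
      rw [Int.cast_sum]
      refine sum_congr rfl fun n hn => ?_
      rw [Int.cast_mul, Int.cast_natCast,
        Nat.cast_div (hb.dvd_of_le (mem_filter.mp hn).2) (hbpos j).ne', mul_div_assoc]
    rw [hint, Int.cast_sum, sum_div, ← sum_filter_add_sum_filter_not F (j ≤ ·)]
    push_cast
    ring
  rw [hsplit]
  calc |∑ n ∈ F.filter (¬ j ≤ ·), (c n * b n : ℝ) / b j|
      ≤ ∑ n ∈ F.filter (¬ j ≤ ·), |(c n * b n : ℝ) / b j| := abs_sum_le_sum_abs _ _
    _ ≤ ∑ n ∈ F.filter (¬ j ≤ ·), (b (n + 1) : ℝ) / (8 * m * b j) := by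
      refine sum_le_sum fun n hn => ?_
      rw [abs_div, abs_mul, abs_of_pos (hbpos n), abs_of_pos (hbpos j)]
      calc |(c n : ℝ)| * b n / b j = |(c n : ℝ)| * (8 * m * b n) / (8 * m * b j) := by
            field_simp
        _ ≤ (b (n + 1) : ℝ) / (8 * m * b j) := by gcongr; exact hc n (mem_filter.mp hn).1
    _ ≤ ∑ n ∈ range j, (b (n + 1) : ℝ) / (8 * m * b j) := by
      refine sum_le_sum_of_subset_of_nonneg (fun n hn => ?_) fun _ _ _ => by positivity
      exact mem_range.mpr (not_le.mp (mem_filter.mp hn).2)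
    _ ≤ 2 * b j / (8 * m * b j) := by
      rw [← sum_div]
      gcongr
      exact_mod_cast hb.sum_range_le_two_mul j
    _ = 1 / (4 * m) := by field_simp [(hbpos j).ne']; ring

theorem nearInt_sum_mul_remainder (hb : IsDSeq b) {m : ℕ} (hm : 0 < m)
    (hV : ∀ k ∈ zeroNhd b m, NearInt (1 / 4) (k * x)) (F : Finset ℕ) {c : ℕ → ℤ}
    (hc : ∀ n ∈ F, |(c n : ℝ)| * (8 * m * b n) ≤ b (n + 1)) :
    NearInt (1 / 4) (∑ n ∈ F, c n * remainder b d x n) := by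
  choose z hz using fun n => exists_mul_eq_intCast_add_remainder (d := d) (x := x) hb n
  refine NearInt.of_intCast_add (w := ∑ n ∈ F, c n * z n) ?_
  convert hV _ (sum_mul_mem_zeroNhd hb hm F hc) using 1
  push_cast
  rw [sum_mul, ← sum_add_distrib]
  refine sum_congr rfl fun n _ => ?_
  rw [mul_assoc, hz]
  ring

theorem nearInt_sum_natCast_mul_abs_remainder (hb : IsDSeq b) {m : ℕ} (hm : 0 < m)
    (hV : ∀ k ∈ zeroNhd b m, NearInt (1 / 4) (k * x)) (F : Finset ℕ) {e : ℕ → ℕ}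
    (he : ∀ n ∈ F, (e n : ℝ) * (8 * m * b n) ≤ b (n + 1)) :
    NearInt (1 / 4) (∑ n ∈ F, e n * |remainder b d x n|) := by
  have hsign (t : ℝ) : |(SignType.sign t : ℝ)| ≤ 1 := by
    rcases lt_trichotomy t 0 with h | h | h <;> simp [h]
  convert nearInt_sum_mul_remainder (d := d)
    (c := fun n => SignType.sign (remainder b d x n) * e n) hb hm hV F fun n hn => ?_ using 2 with n
  · push_cast
    rw [mul_right_comm, sign_mul_self, mul_comm]
  · push_cast
    rw [abs_mul, Nat.abs_cast]
    refine le_trans ?_ (he n hn)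
    gcongr
    exact mul_le_of_le_one_left (Nat.cast_nonneg _) (hsign _)

theorem natCast_scaleBound_mul_le (hb : IsDSeq b) {m : ℕ} (hm : 0 < m) (n : ℕ) :
    (scaleBound b m n : ℝ) * (8 * m * b n) ≤ b (n + 1) := by
  have : (0 : ℝ) < 8 * m * b n := by have := hb.pos n; positivity
  exact (le_div_iff₀ this).mp (Nat.floor_le (by positivity))

theorem one_le_scaleBound (hb : IsDSeq b) {m n : ℕ} (hm : 0 < m)
    (hgrowth : 8 * m * (b n : ℝ) ≤ b (n + 1)) : 1 ≤ scaleBound b m n := by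
  have : (0 : ℝ) < 8 * m * b n := by have := hb.pos n; positivity
  exact Nat.le_floor (by rw [Nat.cast_one, one_le_div this]; exact hgrowth)

section Continuity

variable {m : ℕ} (hb : IsDSeq b)
  (hd : ∀ n : ℕ, 1 ≤ n → |(d n : ℝ)| ≤ (b n : ℝ) / (2 * b (n - 1)))
  (hsum : HasSum (fun n : ℕ => (d (n + 1) : ℝ) / b (n + 1)) x) (hm : 0 < m)
  (hV : ∀ k ∈ zeroNhd b m, NearInt (1 / 4) (k * x))
include hb hd hsum hm hV

theorem scaleBound_mul_abs_remainder_le {n : ℕ}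
    (hgrowth : ∀ l ≥ n, 8 * m * (b l : ℝ) ≤ b (l + 1)) :
    scaleBound b m n * |remainder b d x n| ≤ 1 / 4 := by
  have hm' : (1 : ℝ) ≤ m := by exact_mod_cast hm
  have hr : |remainder b d x n| < 3 / 4 := by
    refine (abs_remainder_le hb hd hsum (R := 8 * m) (by linarith) hgrowth).trans_lt ?_
    have h8 : (8 * m : ℝ)⁻¹ ≤ 8⁻¹ := inv_anti₀ (by norm_num) (by linarith)
    calc (2 * (1 - (8 * m : ℝ)⁻¹))⁻¹ ≤ (2 * (1 - 8⁻¹))⁻¹ := by gcongr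
      _ < 3 / 4 := by norm_num
  refine natCast_mul_abs_le_of_nearInt hr fun c hc => ?_
  simpa using nearInt_sum_mul_remainder hb hm hV {n} (c := fun _ => c) (by
    simp only [mem_singleton, forall_eq, Int.cast_natCast, Nat.abs_cast]
    exact le_trans (by gcongr) (natCast_scaleBound_mul_le hb hm n))

theorem abs_remainder_le_one_div_four {n : ℕ}
    (hgrowth : ∀ l ≥ n, 8 * m * (b l : ℝ) ≤ b (l + 1)) :
    |remainder b d x n| ≤ 1 / 4 :=
  (le_mul_of_one_le_left (abs_nonneg _)
    (by exact_mod_cast one_le_scaleBound hb hm (hgrowth n le_rfl))).trans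
    (scaleBound_mul_abs_remainder_le hb hd hsum hm hV hgrowth)

theorem lt_scaleBound_mul_abs_remainder {n : ℕ}
    (hgrowth : ∀ l ≥ n, 8 * m * (b l : ℝ) ≤ b (l + 1)) (hdn : d (n + 1) ≠ 0) :
    1 / (32 * m) < scaleBound b m n * |remainder b d x n| := by
  have hbpos (k : ℕ) : (0 : ℝ) < b k := by exact_mod_cast hb.pos k
  have hm' : (0 : ℝ) < m := by exact_mod_cast hm
  have hK : (1 : ℝ) ≤ scaleBound b m n := by
    exact_mod_cast one_le_scaleBound hb hm (hgrowth n le_rfl)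
  have hr : |remainder b d x (n + 1)| ≤ 1 / 2 :=
    (abs_remainder_le_one_div_four hb hd hsum hm hV fun l hl => hgrowth l (by omega)).trans
      (by norm_num)
  have hρ : (b (n + 1) : ℝ) / (8 * m * b n) < 2 * scaleBound b m n :=
    (Nat.lt_floor_add_one _).trans_le (by rw [scaleBound] at hK ⊢; linarith)
  calc 1 / (32 * m) = (b (n + 1) : ℝ) / (8 * m * b n) / 2 * (b n / (2 * b (n + 1))) := by
        field_simp [(hbpos n).ne', (hbpos (n + 1)).ne']
        ring
    _ < scaleBound b m n * (b n / (2 * b (n + 1))) := by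
        gcongr
        · exact div_pos (hbpos n) (by linarith [hbpos (n + 1)])
        · linarith
    _ ≤ scaleBound b m n * |remainder b d x n| := by
        gcongr
        exact div_two_mul_le_abs_remainder (hb.pos _) hdn hr

theorem eventually_eq_zero_of_forall_mem_zeroNhd
    (hinf : Tendsto (fun n => (b (n + 1) : ℝ) / b n) atTop atTop) : ∃ N, ∀ n ≥ N, d n = 0 := by
  by_contra! hdigits
  obtain ⟨N₀, hN₀⟩ : ∃ N₀, ∀ l ≥ N₀, 8 * m * (b l : ℝ) ≤ b (l + 1) := by
    obtain ⟨N₀, h⟩ := eventually_atTop.mp (hinf.eventually (eventually_ge_atTop (8 * m : ℝ)))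
    exact ⟨N₀, fun l hl => (le_div_iff₀ (by exact_mod_cast hb.pos l)).mp (h l hl)⟩
  have hgrowth {n : ℕ} (hn : N₀ ≤ n) : ∀ l ≥ n, 8 * m * (b l : ℝ) ≤ b (l + 1) :=
    fun l hl => hN₀ l (hn.trans hl)
  have hS : {n | N₀ ≤ n ∧ d (n + 1) ≠ 0}.Infinite := Set.infinite_of_forall_exists_gt fun a => by
    obtain ⟨n, hn, hdn⟩ := hdigits (N₀ + a + 2)
    exact ⟨n - 1, ⟨by omega, by rwa [Nat.sub_add_cancel (by omega)]⟩, by omega⟩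
  obtain ⟨F, hFS, hFcard⟩ := hS.exists_subset_card_eq (8 * m)
  have hbig : 1 / 4 < ∑ n ∈ F, scaleBound b m n * |remainder b d x n| :=
    calc (1 : ℝ) / 4 = ∑ n ∈ F, (1 : ℝ) / (32 * m) := by
          rw [sum_const, hFcard, nsmul_eq_mul]
          push_cast
          field_simp
          ring
      _ < _ := sum_lt_sum_of_nonempty (card_pos.mp (by omega)) fun n hn =>
          lt_scaleBound_mul_abs_remainder hb hd hsum hm hV (hgrowth (hFS hn).1) (hFS hn).2
  obtain ⟨e, heK, hT⟩ := exists_le_sum_natCast_mul_le F (a := 1 / 4) (β := 1 / 4) (by norm_num)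
    (fun n hn =>
      ⟨abs_nonneg _, abs_remainder_le_one_div_four hb hd hsum hm hV (hgrowth (hFS hn).1)⟩) hbig
  have hnear := nearInt_sum_natCast_mul_abs_remainder (d := d) hb hm hV F (e := e) fun n _ =>
    le_trans (by gcongr; exact_mod_cast heK n) (natCast_scaleBound_mul_le hb hm n)
  have hpos : 0 < ∑ n ∈ F, (e n : ℝ) * |remainder b d x n| := by linarith
  have hle := hnear.abs_le (by rw [abs_of_pos hpos]; linarith)
  rw [abs_of_pos hpos] at hle
  linarith

end Continuity

end DExpansion

theorem stmt_16_general (b : ℕ → ℕ) (hb : IsDSeq b)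
    (hinf : Filter.Tendsto (fun n => (b (n + 1) : ℝ) / b n) Filter.atTop Filter.atTop)
    (x : ℝ)
    (d : ℕ → ℤ) (hd : ∀ n : ℕ, 1 ≤ n → |(d n : ℝ)| ≤ (b n : ℝ) / (2 * b (n - 1)))
    (hsum : HasSum (fun n : ℕ => (d (n + 1) : ℝ) / b (n + 1)) x)
    (hcont : ∃ m : ℕ, 0 < m ∧ ∀ k : ℤ,
      (∀ n : ℕ, ∃ z : ℤ, |(k : ℝ) / b n - z| ≤ 1 / (4 * m)) →
      ∃ z : ℤ, |(k : ℝ) * x - z| ≤ 1 / 4) :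
    (∃ N : ℕ, ∀ n ≥ N, d n = 0) ∧
    (∃ (a : ℤ) (N : ℕ), x = (a : ℝ) / b N) := by
  obtain ⟨m, hm, hV⟩ := hcont
  obtain ⟨N, hN⟩ := DExpansion.eventually_eq_zero_of_forall_mem_zeroNhd hb hd hsum hm hV hinf
  refine ⟨⟨N, hN⟩, ?_⟩
  have hx : x = DExpansion.partialSum b d N :=
    hsum.unique <| hasSum_sum_of_ne_finset_zero fun j hj => by
      rw [hN (j + 1) (by rw [mem_range, not_lt] at hj; omega), Int.cast_zero, zero_div]
  obtain ⟨z, hz⟩ := DExpansion.exists_intCast_eq_mul_partialSum (d := d) hb N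
  refine ⟨z, N, ?_⟩
  rw [hx, ← hz, mul_div_cancel_left₀ _ (by exact_mod_cast (hb.pos N).ne')]

theorem stmt_16 (b : ℕ → ℕ) (hb : IsDSeq b)
    (hinf : Filter.Tendsto (fun n => (b (n + 1) : ℝ) / b n) Filter.atTop Filter.atTop)
    (x : ℝ) (hx : x ∈ Set.Ioc (-(1 / 2) : ℝ) (1 / 2))
    (d : ℕ → ℤ) (hd : ∀ n : ℕ, 1 ≤ n → |(d n : ℝ)| ≤ (b n : ℝ) / (2 * b (n - 1)))
    (hsum : HasSum (fun n : ℕ => (d (n + 1) : ℝ) / b (n + 1)) x)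
    (hcont : ∃ m : ℕ, 0 < m ∧ ∀ k : ℤ,
      (∀ n : ℕ, ∃ z : ℤ, |(k : ℝ) / b n - z| ≤ 1 / (4 * m)) →
      ∃ z : ℤ, |(k : ℝ) * x - z| ≤ 1 / 4) :
    (∃ N : ℕ, ∀ n ≥ N, d n = 0) ∧
    (∃ (a : ℤ) (N : ℕ), x = (a : ℝ) / b N) :=
  stmt_16_general b hb hinf x d hd hsum hcont
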